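/- arXiv:1812.03653 — 4 statements merged into one kernel-verified Lean document; each statement's English description precedes it below -/
import Mathlib

section
/- Let W, U be Hilbert spaces and consider the coupled system: A(w, w̃) + B(u, w̃) = ⟨f, w̃⟩ for all w̃ ∈ W, and B(ũ, w) − κ D(u, ũ) = −κ⟨d, ũ⟩ for all ũ ∈ U, where A is coercive on W (constant α), D is symmetric positive and coercive on H := ker(B) ⊆ U (constant δ), B satisfies the inf-sup condition with constant β > 0 on H⊥, and A, B, D are bounded with constants a, b, d. Then for every f ∈ W', d ∈ U', κ > 0, the system has a unique solution (w, u) ∈ W × U, and ‖u‖ + ‖w‖ ≤ C(‖f‖ + ‖d‖) with C depending only on κ, α, β, δ, a, d. -/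
/-!
Everything rests on an a priori estimate. Split `u = u₀ + u₁` along `ker B ⊕ (ker B)ᗮ`. The first
equation says `B u = f - A w`, so the inf-sup condition bounds `‖u₁‖` by `‖f‖ + ‖A‖ ‖w‖`; testing
the second equation with `u₀ ∈ ker B` and using the coercivity of `D` on `ker B` bounds `‖u₀‖` by
`‖g‖ + ‖D‖ ‖u₁‖`; testing with `(w, u)` gives the energy identity
`A(w, w) + κ D(u, u) = f(w) + κ g(u)`, which bounds `α ‖w‖²`. Together these bound `‖u‖ + ‖w‖`
linearly by `‖f‖ + ‖g‖`, which also gives uniqueness.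

For existence, write the system as a single bilinear form on the Hilbert space `W ×₂ U`. The
estimate says this form is bounded below, so (through the Riesz map) it has closed range; the same
estimate for the transposed system, which has the same shape because `D` is symmetric, makes the
transposed form injective, so the range is also dense.
-/

lemma le_mul_of_sq_le_mul_add_sq {x F p q : ℝ} (hx : 0 ≤ x) (hF : 0 ≤ F) (hp : 0 ≤ p)
    (hq : 0 ≤ q) (h : x ^ 2 ≤ p * F * x + q * F ^ 2) : x ≤ (1 + p + q) * F := by
  rcases le_total x F with hxF | hFx
  · nlinarith [mul_nonneg (add_nonneg hp hq) hF]
  · have : x * x ≤ (p + q) * F * x := by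
      nlinarith [mul_le_mul_of_nonneg_left hFx (mul_nonneg hq hF)]
    rcases hx.eq_or_lt with rfl | hx
    · positivity
    · nlinarith [le_of_mul_le_mul_right this hx]

lemma exists_le_mul_of_saddle_inequalities {α β δ κ a d : ℝ} (hα : 0 < α) (hβ : 0 < β)
    (hδ : 0 < δ) (hκ : 0 < κ) (ha : 0 ≤ a) (hd : 0 ≤ d) :
    ∃ C > 0, ∀ F x y z : ℝ, 0 ≤ F → 0 ≤ x → 0 ≤ z →
      β * z ≤ F + a * x → δ * y ≤ F + d * z → α * x ^ 2 ≤ F * x + κ * F * (y + z) →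
      y + z + x ≤ C * F := by
  set K := (1 + d / δ) / β
  have hK : 0 ≤ K := by positivity
  set Cx := 1 + (1 + κ * K * a) / α + κ * (1 / δ + K) / α
  refine ⟨1 / δ + K + (K * a + 1) * Cx, by positivity, fun F x y z hF hx hz hzx hyz hx2 => ?_⟩
  have hz' : z ≤ (F + a * x) / β := by rw [le_div_iff₀ hβ]; linarith
  have hy' : y ≤ F / δ + d / δ * z := by
    rw [div_mul_eq_mul_div, ← add_div, le_div_iff₀ hδ]; linarith
  have hsum : y + z ≤ (1 / δ + K) * F + K * a * x := by
    have := mul_le_mul_of_nonneg_left hz' (by positivity : 0 ≤ 1 + d / δ)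
    have hK' : (1 / δ + K) * F + K * a * x = F / δ + (1 + d / δ) * ((F + a * x) / β) := by
      simp only [K]; ring
    linarith
  have hxC : x ≤ Cx * F := by
    have hq : x ^ 2 ≤ (1 + κ * K * a) / α * F * x + κ * (1 / δ + K) / α * F ^ 2 := by
      rw [show (1 + κ * K * a) / α * F * x + κ * (1 / δ + K) / α * F ^ 2
          = ((1 + κ * K * a) * F * x + κ * (1 / δ + K) * F ^ 2) / α by ring, le_div_iff₀ hα]
      nlinarith [mul_le_mul_of_nonneg_left hsum (mul_nonneg hκ.le hF)]
    exact le_mul_of_sq_le_mul_add_sq hx hF (by positivity) (by positivity) hq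
  nlinarith [mul_le_mul_of_nonneg_left hxC (by positivity : 0 ≤ K * a + 1)]

section SaddlePoint

variable {W U : Type*} [NormedAddCommGroup W] [NormedSpace ℝ W]
  [NormedAddCommGroup U] [InnerProductSpace ℝ U]
  (A : W →L[ℝ] W →L[ℝ] ℝ) (B : U →L[ℝ] W →L[ℝ] ℝ) (D : U →L[ℝ] U →L[ℝ] ℝ) (κ : ℝ)

def SolvesSaddle (f : W →L[ℝ] ℝ) (g : U →L[ℝ] ℝ) (w : W) (u : U) : Prop :=
  (∀ wt : W, A w wt + B u wt = f wt) ∧ (∀ ut : U, B ut w - κ * D u ut = -(κ * g ut))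

variable {A B D κ}

lemma SolvesSaddle.sub {f f' : W →L[ℝ] ℝ} {g g' : U →L[ℝ] ℝ} {w w' : W} {u u' : U}
    (h : SolvesSaddle A B D κ f g w u) (h' : SolvesSaddle A B D κ f' g' w' u') :
    SolvesSaddle A B D κ (f - f') (g - g') (w - w') (u - u') := by
  refine ⟨fun wt => ?_, fun ut => ?_⟩
  · simp only [map_sub, sub_apply]
    linarith [h.1 wt, h'.1 wt]
  · simp only [map_sub, sub_apply]
    linarith [h.2 ut, h'.2 ut]

lemma SolvesSaddle.norm_apply_le {f : W →L[ℝ] ℝ} {g : U →L[ℝ] ℝ} {w : W} {u : U}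
    (h : SolvesSaddle A B D κ f g w u) : ‖B u‖ ≤ ‖f‖ + ‖A‖ * ‖w‖ := by
  have hBu : B u = f - A w := by
    ext wt
    simp only [sub_apply]
    linarith [h.1 wt]
  calc ‖B u‖ ≤ ‖f‖ + ‖A w‖ := hBu ▸ norm_sub_le f (A w)
    _ ≤ ‖f‖ + ‖A‖ * ‖w‖ := by gcongr; exact A.le_opNorm w

lemma SolvesSaddle.mul_norm_le_of_mem_ker {f : W →L[ℝ] ℝ} {g : U →L[ℝ] ℝ} {w : W} {u : U}
    (h : SolvesSaddle A B D κ f g w u) (hκ : κ ≠ 0) {δ : ℝ}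
    (hDcoer : ∀ v ∈ LinearMap.ker (B : U →ₗ[ℝ] W →L[ℝ] ℝ), δ * ‖v‖ ^ 2 ≤ D v v)
    {v : U} (hv : v ∈ LinearMap.ker (B : U →ₗ[ℝ] W →L[ℝ] ℝ)) :
    δ * ‖v‖ ≤ ‖g‖ + ‖D‖ * ‖u - v‖ := by
  have hBv : B v = 0 := hv
  have hDuv : D u v = g v := by
    have := h.2 v
    rw [hBv, zero_apply, zero_sub, neg_inj] at this
    exact mul_left_cancel₀ hκ this
  have hsq : δ * ‖v‖ ^ 2 ≤ (‖g‖ + ‖D‖ * ‖u - v‖) * ‖v‖ :=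
    calc δ * ‖v‖ ^ 2 ≤ D v v := hDcoer v hv
      _ = g v - D (u - v) v := by rw [map_sub, sub_apply, hDuv]; ring
      _ ≤ ‖g‖ * ‖v‖ + ‖D‖ * ‖u - v‖ * ‖v‖ := by
        have hg : g v ≤ ‖g‖ * ‖v‖ := (le_abs_self _).trans (g.le_opNorm v)
        have hD : |D (u - v) v| ≤ ‖D‖ * ‖u - v‖ * ‖v‖ := D.le_opNorm₂ _ _
        linarith [neg_abs_le (D (u - v) v)]
      _ = (‖g‖ + ‖D‖ * ‖u - v‖) * ‖v‖ := by ring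
  rcases (norm_nonneg v).eq_or_lt with hv0 | hv0
  · rw [← hv0, mul_zero]; positivity
  · nlinarith

lemma SolvesSaddle.mul_norm_sq_le {f : W →L[ℝ] ℝ} {g : U →L[ℝ] ℝ} {w : W} {u : U}
    (h : SolvesSaddle A B D κ f g w u) (hκ : 0 ≤ κ) {α : ℝ}
    (hAcoer : ∀ v : W, α * ‖v‖ ^ 2 ≤ A v v) (hDpos : ∀ u : U, 0 ≤ D u u) :
    α * ‖w‖ ^ 2 ≤ ‖f‖ * ‖w‖ + κ * (‖g‖ * ‖u‖) := by
  have henergy : A w w + κ * D u u = f w + κ * g u := by linarith [h.1 w, h.2 u]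
  have hf : f w ≤ ‖f‖ * ‖w‖ := (le_abs_self _).trans (f.le_opNorm w)
  have hg : g u ≤ ‖g‖ * ‖u‖ := (le_abs_self _).trans (g.le_opNorm u)
  nlinarith [hAcoer w, mul_nonneg hκ (hDpos u), mul_le_mul_of_nonneg_left hg hκ]

theorem exists_norm_le_of_solvesSaddle [CompleteSpace U] {α β δ : ℝ}
    (hα : 0 < α) (hβ : 0 < β) (hδ : 0 < δ) (hκ : 0 < κ)
    (hAcoer : ∀ v : W, α * ‖v‖ ^ 2 ≤ A v v) (hDpos : ∀ u : U, 0 ≤ D u u)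
    (hDcoer : ∀ u ∈ LinearMap.ker (B : U →ₗ[ℝ] W →L[ℝ] ℝ), δ * ‖u‖ ^ 2 ≤ D u u)
    (hinfsup : ∀ u ∈ (LinearMap.ker (B : U →ₗ[ℝ] W →L[ℝ] ℝ))ᗮ, β * ‖u‖ ≤ ‖B u‖) :
    ∃ C > 0, ∀ f g w u, SolvesSaddle A B D κ f g w u → ‖u‖ + ‖w‖ ≤ C * (‖f‖ + ‖g‖) := by
  obtain ⟨C, hC, hbound⟩ := exists_le_mul_of_saddle_inequalities hα hβ hδ hκ
    (norm_nonneg A) (norm_nonneg D)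
  refine ⟨C, hC, fun f g w u h => ?_⟩
  set H := LinearMap.ker (B : U →ₗ[ℝ] W →L[ℝ] ℝ)
  have : CompleteSpace H := (ContinuousLinearMap.isClosed_ker B).completeSpace_coe
  set u₀ := H.starProjection u
  have hu₀ : u₀ ∈ H := H.starProjection_apply_mem u
  have hu₁ : u - u₀ ∈ Hᗮ := H.sub_starProjection_mem_orthogonal u
  have hBu : B (u - u₀) = B u := by
    rw [map_sub, show B u₀ = 0 from hu₀, sub_zero]
  have hf : ‖f‖ ≤ ‖f‖ + ‖g‖ := le_add_of_nonneg_right (norm_nonneg g)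
  have hg : ‖g‖ ≤ ‖f‖ + ‖g‖ := le_add_of_nonneg_left (norm_nonneg f)
  have hu : ‖u‖ ≤ ‖u₀‖ + ‖u - u₀‖ := norm_le_insert' ..
  have hperp : β * ‖u - u₀‖ ≤ ‖f‖ + ‖g‖ + ‖A‖ * ‖w‖ := by
    linarith [hinfsup _ hu₁, hBu ▸ h.norm_apply_le]
  have hker : δ * ‖u₀‖ ≤ ‖f‖ + ‖g‖ + ‖D‖ * ‖u - u₀‖ := by
    linarith [h.mul_norm_le_of_mem_ker hκ.ne' hDcoer hu₀]
  have henergy : α * ‖w‖ ^ 2 ≤ (‖f‖ + ‖g‖) * ‖w‖ + κ * (‖f‖ + ‖g‖) * (‖u₀‖ + ‖u - u₀‖) := by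
    have := h.mul_norm_sq_le hκ.le hAcoer hDpos
    nlinarith [mul_le_mul hg hu (norm_nonneg u) (by positivity), norm_nonneg w]
  linarith [hbound _ _ _ _ (by positivity) (norm_nonneg w) (norm_nonneg _) hperp hker henergy]

lemma SolvesSaddle.eq_of_norm_le {C : ℝ}
    (hest : ∀ f g w u, SolvesSaddle A B D κ f g w u → ‖u‖ + ‖w‖ ≤ C * (‖f‖ + ‖g‖))
    {f : W →L[ℝ] ℝ} {g : U →L[ℝ] ℝ} {w w' : W} {u u' : U}
    (h : SolvesSaddle A B D κ f g w u) (h' : SolvesSaddle A B D κ f g w' u') :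
    w = w' ∧ u = u' := by
  have hdiff := hest _ _ _ _ (h.sub h')
  simp only [sub_self, norm_zero, add_zero, mul_zero] at hdiff
  constructor <;> rw [← sub_eq_zero, ← norm_le_zero_iff]
  · linarith [norm_nonneg (u - u')]
  · linarith [norm_nonneg (w - w')]

end SaddlePoint

lemma ContinuousLinearMap.surjective_of_norm_le_mul_norm_of_injective_flip {E : Type*}
    [NormedAddCommGroup E] [InnerProductSpace ℝ E] [CompleteSpace E]
    {M : E →L[ℝ] E →L[ℝ] ℝ} {C : ℝ} (hM : ∀ p, ‖p‖ ≤ C * ‖M p‖)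
    (hMt : Function.Injective M.flip) : Function.Surjective M := by
  let T : E →L[ℝ] E :=
    (InnerProductSpace.toDual ℝ E).symm.toContinuousLinearEquiv.toContinuousLinearMap ∘L M
  have hT : AntilipschitzWith C.toNNReal T := T.antilipschitz_of_bound fun p => by
    simpa [T] using (hM p).trans (by gcongr; exact C.le_coe_toNNReal)
  have hclosed : IsClosed ((LinearMap.range (T : E →ₗ[ℝ] E) : Submodule ℝ E) : Set E) := by
    rw [LinearMap.coe_range, coe_coe]
    exact hT.isClosed_range T.uniformContinuous
  have : CompleteSpace (LinearMap.range (T : E →ₗ[ℝ] E)) := hclosed.completeSpace_coe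
  have horth : (LinearMap.range (T : E →ₗ[ℝ] E))ᗮ = ⊥ := by
    refine (Submodule.eq_bot_iff _).2 fun q hq => hMt ?_
    ext p
    simpa [T, InnerProductSpace.toDual_symm_apply] using
      (Submodule.mem_orthogonal _ _).1 hq (T p) ⟨p, rfl⟩
  intro φ
  obtain ⟨p, hp⟩ : (InnerProductSpace.toDual ℝ E).symm φ ∈ LinearMap.range (T : E →ₗ[ℝ] E) := by
    rw [Submodule.orthogonal_eq_bot_iff.1 horth]; trivial
  exact ⟨p, by simpa [T] using hp⟩

lemma WithLp.prod_norm_le_add {α β : Type*} [SeminormedAddCommGroup α] [SeminormedAddCommGroup β]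
    (p : WithLp 2 (α × β)) : ‖p‖ ≤ ‖p.fst‖ + ‖p.snd‖ :=
  calc ‖p‖ = ‖WithLp.toLp 2 (p.fst, (0 : β)) + WithLp.toLp 2 ((0 : α), p.snd)‖ := by
        congr 1; apply WithLp.ofLp_injective 2; ext <;> simp
    _ ≤ ‖p.fst‖ + ‖p.snd‖ := by
        simpa using norm_add_le (WithLp.toLp 2 (p.fst, (0 : β))) (WithLp.toLp 2 ((0 : α), p.snd))

section SaddleForm

variable {W U : Type*} [NormedAddCommGroup W] [InnerProductSpace ℝ W]
  [NormedAddCommGroup U] [InnerProductSpace ℝ U]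

noncomputable def saddleForm (A : W →L[ℝ] W →L[ℝ] ℝ) (B : U →L[ℝ] W →L[ℝ] ℝ)
    (D : U →L[ℝ] U →L[ℝ] ℝ) (κ : ℝ) :
    WithLp 2 (W × U) →L[ℝ] WithLp 2 (W × U) →L[ℝ] ℝ :=
  A.bilinearComp (WithLp.fstL 2 ℝ W U) (WithLp.fstL 2 ℝ W U)
    + B.bilinearComp (WithLp.sndL 2 ℝ W U) (WithLp.fstL 2 ℝ W U)
    + B.flip.bilinearComp (WithLp.fstL 2 ℝ W U) (WithLp.sndL 2 ℝ W U)
    - κ • D.bilinearComp (WithLp.sndL 2 ℝ W U) (WithLp.sndL 2 ℝ W U)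

variable {A : W →L[ℝ] W →L[ℝ] ℝ} {B : U →L[ℝ] W →L[ℝ] ℝ} {D : U →L[ℝ] U →L[ℝ] ℝ} {κ : ℝ}

@[simp]
lemma saddleForm_apply (p q : WithLp 2 (W × U)) :
    saddleForm A B D κ p q
      = A p.fst q.fst + B p.snd q.fst + B q.snd p.fst - κ * D p.snd q.snd := by
  simp [saddleForm]

lemma saddleForm_flip (hDsym : ∀ u v : U, D u v = D v u) :
    (saddleForm A B D κ).flip = saddleForm A.flip B D κ := by
  ext q p
  simp only [ContinuousLinearMap.flip_apply, saddleForm_apply, hDsym p.snd]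
  ring

lemma solvesSaddle_of_saddleForm_eq {f : W →L[ℝ] ℝ} {g : U →L[ℝ] ℝ} {p : WithLp 2 (W × U)}
    (h : ∀ q, saddleForm A B D κ p q = f q.fst - κ * g q.snd) :
    SolvesSaddle A B D κ f g p.fst p.snd := by
  refine ⟨fun wt => ?_, fun ut => ?_⟩
  · simpa using h (WithLp.toLp 2 (wt, 0))
  · simpa using h (WithLp.toLp 2 (0, ut))


lemma exists_norm_le_mul_norm_saddleForm (hκ : 0 < κ)
    (hest : ∃ C > 0, ∀ (f : W →L[ℝ] ℝ) (g : U →L[ℝ] ℝ) w u,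
      SolvesSaddle A B D κ f g w u → ‖u‖ + ‖w‖ ≤ C * (‖f‖ + ‖g‖)) :
    ∃ C, ∀ p, ‖p‖ ≤ C * ‖saddleForm A B D κ p‖ := by
  obtain ⟨C, hC, hest⟩ := hest
  let e : W × U →L[ℝ] WithLp 2 (W × U) := (WithLp.prodContinuousLinearEquiv 2 ℝ W U).symm
  let j₁ := e ∘L ContinuousLinearMap.inl ℝ W U
  let j₂ := e ∘L ContinuousLinearMap.inr ℝ W U
  refine ⟨C * (1 + κ⁻¹), fun p => ?_⟩
  set φ := saddleForm A B D κ p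
  have hsolves : SolvesSaddle A B D κ (φ ∘L j₁) (-κ⁻¹ • φ ∘L j₂) p.fst p.snd := by
    refine solvesSaddle_of_saddleForm_eq fun q => ?_
    have hq : q = j₁ q.fst + j₂ q.snd := by
      apply WithLp.ofLp_injective 2; ext <;> simp [j₁, j₂, e]
    calc φ q = φ (j₁ q.fst) + φ (j₂ q.snd) := by rw [← map_add, ← hq]
      _ = _ := by
        simp only [ContinuousLinearMap.comp_apply, smul_apply, smul_eq_mul]
        field_simp
        ring
  have hf : ‖φ ∘L j₁‖ ≤ ‖φ‖ := ContinuousLinearMap.opNorm_le_bound _ φ.opNorm_nonneg fun w => by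
    simpa [j₁, e] using φ.le_opNorm (WithLp.toLp 2 (w, (0 : U)))
  have hg : ‖-κ⁻¹ • φ ∘L j₂‖ ≤ κ⁻¹ * ‖φ‖ := by
    rw [norm_smul, norm_neg, Real.norm_of_nonneg (by positivity)]
    gcongr
    refine ContinuousLinearMap.opNorm_le_bound _ φ.opNorm_nonneg fun u => ?_
    simpa [j₂, e] using φ.le_opNorm (WithLp.toLp 2 ((0 : W), u))
  calc ‖p‖ ≤ ‖p.snd‖ + ‖p.fst‖ := (WithLp.prod_norm_le_add p).trans_eq (add_comm _ _)
    _ ≤ C * (‖φ ∘L j₁‖ + ‖-κ⁻¹ • φ ∘L j₂‖) := hest _ _ _ _ hsolves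
    _ ≤ C * (1 + κ⁻¹) * ‖φ‖ := by rw [mul_assoc]; gcongr; linarith
end SaddleForm

theorem stmt5_general {W U : Type*}
    [NormedAddCommGroup W] [InnerProductSpace ℝ W] [CompleteSpace W]
    [NormedAddCommGroup U] [InnerProductSpace ℝ U] [CompleteSpace U]
    (A : W →L[ℝ] W →L[ℝ] ℝ) (B : U →L[ℝ] W →L[ℝ] ℝ) (D : U →L[ℝ] U →L[ℝ] ℝ)
    (α β δ κ : ℝ)
    (hα : 0 < α) (hβ : 0 < β) (hδ : 0 < δ) (hκ : 0 < κ)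
    (hAcoer : ∀ v : W, α * ‖v‖ ^ 2 ≤ A v v)
    (hDsym : ∀ u v : U, D u v = D v u) (hDpos : ∀ u : U, 0 ≤ D u u)
    (hDcoer : ∀ u ∈ LinearMap.ker (B : U →ₗ[ℝ] W →L[ℝ] ℝ), δ * ‖u‖ ^ 2 ≤ D u u)
    (hinfsup : ∀ u ∈ (LinearMap.ker (B : U →ₗ[ℝ] W →L[ℝ] ℝ))ᗮ, β * ‖u‖ ≤ ‖B u‖) :
    ∃ C > 0, ∀ (f : W →L[ℝ] ℝ) (d' : U →L[ℝ] ℝ),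
      (∃! p : W × U,
        (∀ wt : W, A p.1 wt + B p.2 wt = f wt) ∧
        (∀ ut : U, B ut p.1 - κ * D p.2 ut = -(κ * d' ut))) ∧
      (∀ p : W × U,
        ((∀ wt : W, A p.1 wt + B p.2 wt = f wt) ∧
         (∀ ut : U, B ut p.1 - κ * D p.2 ut = -(κ * d' ut))) →
        ‖p.2‖ + ‖p.1‖ ≤ C * (‖f‖ + ‖d'‖)) := by
  obtain ⟨C, hC, hest⟩ := exists_norm_le_of_solvesSaddle hα hβ hδ hκ hAcoer hDpos hDcoer hinfsup
  obtain ⟨K, hK⟩ := exists_norm_le_mul_norm_saddleForm hκ ⟨C, hC, hest⟩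
  obtain ⟨Kt, hKt⟩ := exists_norm_le_mul_norm_saddleForm hκ
    (exists_norm_le_of_solvesSaddle (A := A.flip) hα hβ hδ hκ hAcoer hDpos hDcoer hinfsup)
  have hflip : Function.Injective (saddleForm A B D κ).flip := by
    rw [saddleForm_flip hDsym, injective_iff_map_eq_zero]
    exact fun q hq => by simpa [hq, ContinuousLinearMap.opNorm_zero] using hKt q
  have hsurj := ContinuousLinearMap.surjective_of_norm_le_mul_norm_of_injective_flip hK hflip
  refine ⟨C, hC, fun f g => ⟨?_, fun p hp => hest f g p.1 p.2 hp⟩⟩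
  obtain ⟨p, hp⟩ := hsurj (f ∘L WithLp.fstL 2 ℝ W U - κ • g ∘L WithLp.sndL 2 ℝ W U)
  have hsol : SolvesSaddle A B D κ f g p.fst p.snd :=
    solvesSaddle_of_saddleForm_eq fun q => by simp [hp]
  refine ⟨(p.fst, p.snd), hsol, fun p' hp' => ?_⟩
  obtain ⟨hw, hu⟩ := SolvesSaddle.eq_of_norm_le hest hp' hsol
  exact Prod.ext hw hu

theorem stmt5 {W U : Type*}
    [NormedAddCommGroup W] [InnerProductSpace ℝ W] [CompleteSpace W]
    [NormedAddCommGroup U] [InnerProductSpace ℝ U] [CompleteSpace U]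
    (A : W →L[ℝ] W →L[ℝ] ℝ) (B : U →L[ℝ] W →L[ℝ] ℝ) (D : U →L[ℝ] U →L[ℝ] ℝ)
    (α β δ a b d κ : ℝ)
    (hα : 0 < α) (hβ : 0 < β) (hδ : 0 < δ) (hκ : 0 < κ)
    (hAcont : ∀ (v wt : W), A v wt ≤ a * ‖v‖ * ‖wt‖)
    (hBcont : ∀ (u : U) (wt : W), B u wt ≤ b * ‖u‖ * ‖wt‖)
    (hDcont : ∀ u v : U, D u v ≤ d * ‖u‖ * ‖v‖)
    (hAcoer : ∀ v : W, α * ‖v‖ ^ 2 ≤ A v v)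
    (hDsym : ∀ u v : U, D u v = D v u) (hDpos : ∀ u : U, 0 ≤ D u u)
    (hDcoer : ∀ u ∈ LinearMap.ker (B : U →ₗ[ℝ] W →L[ℝ] ℝ), δ * ‖u‖ ^ 2 ≤ D u u)
    (hinfsup : ∀ u ∈ (LinearMap.ker (B : U →ₗ[ℝ] W →L[ℝ] ℝ))ᗮ, β * ‖u‖ ≤ ‖B u‖) :
    ∃ C > 0, ∀ (f : W →L[ℝ] ℝ) (d' : U →L[ℝ] ℝ),
      (∃! p : W × U,
        (∀ wt : W, A p.1 wt + B p.2 wt = f wt) ∧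
        (∀ ut : U, B ut p.1 - κ * D p.2 ut = -(κ * d' ut))) ∧
      (∀ p : W × U,
        ((∀ wt : W, A p.1 wt + B p.2 wt = f wt) ∧
         (∀ ut : U, B ut p.1 - κ * D p.2 ut = -(κ * d' ut))) →
        ‖p.2‖ + ‖p.1‖ ≤ C * (‖f‖ + ‖d'‖)) :=
  stmt5_general A B D α β δ κ hα hβ hδ hκ hAcoer hDsym hDpos hDcoer hinfsup
end

section
/- Under the assumptions of the well-posedness theorem for the coupled system (A coercive with constant α, D coercive on H = ker B with constant δ, inf-sup constant β for B on H⊥, continuity constants a, b, d), if f = 0 and d ∈ H' (i.e., d₁ = 0), then the solution satisfies ‖w‖ ≤ Q‖d₀‖ where 2Q = κα⁻¹(q_d r_a + √(4α(κδ)⁻¹ + q_d² r_a²)), with q_d = d/δ, r_a = a/β. In particular ‖w‖² − κα⁻¹ q_d r_a ‖d₀‖‖w‖ − κα⁻¹δ⁻¹‖d₀‖² ≤ 0. -/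
/-!
Split `u = u₀ + u₁` along `H = ker B` and `Hᗮ`. Testing the second equation with `u₀ ∈ H` gives
`D u u₀ = d₀ u₀`, and testing both equations with the solution itself gives
`A w w = κ (d₀ u₀ - D u u) ≤ κ ‖d₀‖ ‖u₀‖`. Coercivity of `D` on `H` bounds
`δ ‖u₀‖ ≤ ‖d₀‖ + d ‖u₁‖`, and the inf-sup condition together with the first equation
`B u = -A w` bounds `β ‖u₁‖ ≤ a ‖w‖`. Chaining these gives the quadratic inequality in `‖w‖`,
and `Q ‖d₀‖` is its positive root.
-/

section BoundedBilinear

variable {E F : Type*} [SeminormedAddCommGroup E] [NormedSpace ℝ E]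
  [SeminormedAddCommGroup F] [NormedSpace ℝ F]

theorem abs_apply_le_of_apply_le (A : E →L[ℝ] F →L[ℝ] ℝ) {a : ℝ}
    (hA : ∀ x y, A x y ≤ a * ‖x‖ * ‖y‖) (x : E) (y : F) : |A x y| ≤ a * ‖x‖ * ‖y‖ := by
  refine abs_le.2 ⟨?_, hA x y⟩
  have h := hA x (-y)
  rw [map_neg, norm_neg] at h
  linarith

theorem mul_norm_nonneg_of_apply_self_nonneg (A : E →L[ℝ] E →L[ℝ] ℝ) {a : ℝ}
    (hA : ∀ x y, A x y ≤ a * ‖x‖ * ‖y‖) {x : E} (hx : 0 ≤ A x x) : 0 ≤ a * ‖x‖ := by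
  rcases (norm_nonneg x).eq_or_lt with h | h
  · rw [← h, mul_zero]
  · exact nonneg_of_mul_nonneg_left (hx.trans (hA x x)) h

theorem norm_apply_le_of_apply_le (A : E →L[ℝ] E →L[ℝ] ℝ) {a : ℝ}
    (hA : ∀ x y, A x y ≤ a * ‖x‖ * ‖y‖) {x : E} (hx : 0 ≤ A x x) : ‖A x‖ ≤ a * ‖x‖ :=
  (A x).opNorm_le_bound (mul_norm_nonneg_of_apply_self_nonneg A hA hx) fun y => by
    rw [Real.norm_eq_abs]
    exact abs_apply_le_of_apply_le A hA x y

end BoundedBilinear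

section CoupledSystem

variable {W U : Type*} [NormedAddCommGroup W] [NormedSpace ℝ W]
  [NormedAddCommGroup U] [NormedSpace ℝ U]
  {A : W →L[ℝ] W →L[ℝ] ℝ} {B : U →L[ℝ] W →L[ℝ] ℝ} {D : U →L[ℝ] U →L[ℝ] ℝ} {d₀ : U →L[ℝ] ℝ}
  {κ : ℝ} {w : W} {u : U}

theorem apply_eq_of_coupled_of_apply_eq_zero (hκ : κ ≠ 0)
    (h2 : ∀ ut : U, B ut w - κ * D u ut = -(κ * d₀ ut)) {v : U} (hv : B v = 0) :
    D u v = d₀ v := by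
  have h := h2 v
  rw [hv, zero_apply, zero_sub, neg_inj] at h
  exact mul_left_cancel₀ hκ h

theorem mul_norm_sq_le_of_coupled {α : ℝ} (hκ : 0 ≤ κ) (hAcoer : α * ‖w‖ ^ 2 ≤ A w w)
    (hDpos : 0 ≤ D u u) (h1 : ∀ wt : W, A w wt + B u wt = 0)
    (h2 : ∀ ut : U, B ut w - κ * D u ut = -(κ * d₀ ut)) :
    α * ‖w‖ ^ 2 ≤ κ * d₀ u := by
  linarith [h1 w, h2 u, mul_nonneg hκ hDpos]

theorem norm_apply_le_of_coupled {a : ℝ} (hAcont : ∀ v wt : W, A v wt ≤ a * ‖v‖ * ‖wt‖)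
    (hAw : 0 ≤ A w w) (h1 : ∀ wt : W, A w wt + B u wt = 0) : ‖B u‖ ≤ a * ‖w‖ := by
  have hBu : B u = -A w := by
    ext wt
    simp only [neg_apply]
    linarith [h1 wt]
  rw [hBu, norm_neg]
  exact norm_apply_le_of_apply_le A hAcont hAw

end CoupledSystem

theorem le_half_add_sqrt_of_sq_sub_mul_sub_nonpos {b c t : ℝ} (h : t ^ 2 - b * t - c ≤ 0) :
    t ≤ (b + √(b ^ 2 + 4 * c)) / 2 := by
  have h' : |2 * t - b| ≤ √(b ^ 2 + 4 * c) := Real.abs_le_sqrt (by nlinarith)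
  linarith [le_abs_self (2 * t - b)]

theorem sq_sub_mul_sub_nonpos_of_energy_bounds {α β δ κ a d t N x y : ℝ}
    (hα : 0 < α) (hβ : 0 < β) (hδ : 0 < δ) (hκ : 0 < κ) (hN : 0 ≤ N) (hx : 0 ≤ x)
    (henergy : α * t ^ 2 ≤ κ * (N * x)) (hker : δ * x ^ 2 ≤ (N + d * y) * x)
    (hdx : 0 ≤ d * x) (hperp : β * y ≤ a * t) :
    t ^ 2 - κ / α * (d / δ) * (a / β) * N * t - κ / (α * δ) * N ^ 2 ≤ 0 := by
  rcases hx.eq_or_lt with rfl | hx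
  · obtain rfl : t = 0 :=
      (sq_nonpos_iff t).1 (nonpos_of_mul_nonpos_right (by simpa using henergy) hα)
    have : 0 ≤ κ / (α * δ) * N ^ 2 := by positivity
    simpa using this
  have hd : 0 ≤ d := nonneg_of_mul_nonneg_left hdx hx
  have hy : d * y ≤ d * (a / β * t) :=
    mul_le_mul_of_nonneg_left (by rw [div_mul_eq_mul_div, le_div_iff₀ hβ]; linarith) hd
  have hδx : δ * x ≤ N + d * (a / β * t) := by nlinarith
  have hquad : α * δ * t ^ 2 ≤ κ * N * (N + d * (a / β * t)) := by
    nlinarith [mul_le_mul_of_nonneg_left hδx (mul_nonneg hκ.le hN)]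
  have hαδ : 0 < α * δ := mul_pos hα hδ
  rw [show t ^ 2 - κ / α * (d / δ) * (a / β) * N * t - κ / (α * δ) * N ^ 2
      = (α * δ * t ^ 2 - κ * N * (N + d * (a / β * t))) / (α * δ) by field_simp; ring]
  exact div_nonpos_of_nonpos_of_nonneg (by linarith) hαδ.le

theorem stmt6_general {W U : Type*}
    [NormedAddCommGroup W] [InnerProductSpace ℝ W]
    [NormedAddCommGroup U] [InnerProductSpace ℝ U] [CompleteSpace U]
    (A : W →L[ℝ] W →L[ℝ] ℝ) (B : U →L[ℝ] W →L[ℝ] ℝ) (D : U →L[ℝ] U →L[ℝ] ℝ)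
    (α β δ a d κ : ℝ)
    (hα : 0 < α) (hβ : 0 < β) (hδ : 0 < δ) (hκ : 0 < κ)
    (hAcont : ∀ (v wt : W), A v wt ≤ a * ‖v‖ * ‖wt‖)
    (hDcont : ∀ u v : U, D u v ≤ d * ‖u‖ * ‖v‖)
    (hAcoer : ∀ v : W, α * ‖v‖ ^ 2 ≤ A v v)
    (hDpos : ∀ u : U, 0 ≤ D u u)
    (hDcoer : ∀ u ∈ LinearMap.ker (B : U →ₗ[ℝ] W →L[ℝ] ℝ), δ * ‖u‖ ^ 2 ≤ D u u)
    (hinfsup : ∀ u ∈ (LinearMap.ker (B : U →ₗ[ℝ] W →L[ℝ] ℝ))ᗮ, β * ‖u‖ ≤ ‖B u‖)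
    (d₀ : U →L[ℝ] ℝ) (hd₀ : ∀ v ∈ (LinearMap.ker (B : U →ₗ[ℝ] W →L[ℝ] ℝ))ᗮ, d₀ v = 0)
    (w : W) (u : U)
    (h1 : ∀ wt : W, A w wt + B u wt = 0)
    (h2 : ∀ ut : U, B ut w - κ * D u ut = -(κ * d₀ ut)) :
    ‖w‖ ≤ (κ / α * ((d / δ) * (a / β) +
        Real.sqrt (4 * α / (κ * δ) + (d / δ) ^ 2 * (a / β) ^ 2)) / 2) * ‖d₀‖ ∧
    ‖w‖ ^ 2 - κ / α * (d / δ) * (a / β) * ‖d₀‖ * ‖w‖ - κ / (α * δ) * ‖d₀‖ ^ 2 ≤ 0 := by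
  have : CompleteSpace (LinearMap.ker (B : U →ₗ[ℝ] W →L[ℝ] ℝ)) :=
    B.isClosed_ker.completeSpace_coe
  obtain ⟨u₀, hu₀, u₁, hu₁, rfl⟩ :=
    Submodule.exists_add_mem_mem_orthogonal (K := LinearMap.ker (B : U →ₗ[ℝ] W →L[ℝ] ℝ)) u
  have hBu₀ : B u₀ = 0 := hu₀
  have hd₀u : d₀ (u₀ + u₁) = d₀ u₀ := by rw [map_add, hd₀ u₁ hu₁, add_zero]
  have hd₀u₀ : d₀ u₀ ≤ ‖d₀‖ * ‖u₀‖ := (Real.le_norm_self _).trans (d₀.le_opNorm u₀)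
  have henergy : α * ‖w‖ ^ 2 ≤ κ * (‖d₀‖ * ‖u₀‖) := by
    have h := mul_norm_sq_le_of_coupled hκ.le (hAcoer w) (hDpos _) h1 h2
    rw [hd₀u] at h
    exact h.trans (mul_le_mul_of_nonneg_left hd₀u₀ hκ.le)
  have hker : δ * ‖u₀‖ ^ 2 ≤ (‖d₀‖ + d * ‖u₁‖) * ‖u₀‖ :=
    calc δ * ‖u₀‖ ^ 2 ≤ D u₀ u₀ := hDcoer u₀ hu₀
      _ = d₀ u₀ - D u₁ u₀ := by
        rw [← apply_eq_of_coupled_of_apply_eq_zero hκ.ne' h2 hBu₀, map_add, add_apply]; ring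
      _ ≤ ‖d₀‖ * ‖u₀‖ + d * ‖u₁‖ * ‖u₀‖ := by
        linarith [neg_abs_le (D u₁ u₀), abs_apply_le_of_apply_le D hDcont u₁ u₀]
      _ = (‖d₀‖ + d * ‖u₁‖) * ‖u₀‖ := by ring
  have hperp : β * ‖u₁‖ ≤ a * ‖w‖ :=
    calc β * ‖u₁‖ ≤ ‖B u₁‖ := hinfsup u₁ hu₁
      _ = ‖B (u₀ + u₁)‖ := by rw [map_add, hBu₀, zero_add]
      _ ≤ a * ‖w‖ := norm_apply_le_of_coupled hAcont
          ((mul_nonneg hα.le (sq_nonneg _)).trans (hAcoer w)) h1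
  have hquad := sq_sub_mul_sub_nonpos_of_energy_bounds hα hβ hδ hκ (norm_nonneg d₀)
    (norm_nonneg u₀) henergy hker (mul_norm_nonneg_of_apply_self_nonneg D hDcont (hDpos u₀))
    hperp
  refine ⟨(le_half_add_sqrt_of_sq_sub_mul_sub_nonpos hquad).trans_eq ?_, hquad⟩
  have hs : 0 ≤ κ / α * ‖d₀‖ := by positivity
  rw [show (κ / α * (d / δ) * (a / β) * ‖d₀‖) ^ 2 + 4 * (κ / (α * δ) * ‖d₀‖ ^ 2)
      = (κ / α * ‖d₀‖) ^ 2 * (4 * α / (κ * δ) + (d / δ) ^ 2 * (a / β) ^ 2) by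
        field_simp; ring,
    Real.sqrt_mul (sq_nonneg _), Real.sqrt_sq hs]
  ring

theorem stmt6 {W U : Type*}
    [NormedAddCommGroup W] [InnerProductSpace ℝ W] [CompleteSpace W]
    [NormedAddCommGroup U] [InnerProductSpace ℝ U] [CompleteSpace U]
    (A : W →L[ℝ] W →L[ℝ] ℝ) (B : U →L[ℝ] W →L[ℝ] ℝ) (D : U →L[ℝ] U →L[ℝ] ℝ)
    (α β δ a d κ : ℝ)
    (hα : 0 < α) (hβ : 0 < β) (hδ : 0 < δ) (hκ : 0 < κ)
    (hAcont : ∀ (v wt : W), A v wt ≤ a * ‖v‖ * ‖wt‖)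
    (hDcont : ∀ u v : U, D u v ≤ d * ‖u‖ * ‖v‖)
    (hAcoer : ∀ v : W, α * ‖v‖ ^ 2 ≤ A v v)
    (hDsym : ∀ u v : U, D u v = D v u) (hDpos : ∀ u : U, 0 ≤ D u u)
    (hDcoer : ∀ u ∈ LinearMap.ker (B : U →ₗ[ℝ] W →L[ℝ] ℝ), δ * ‖u‖ ^ 2 ≤ D u u)
    (hinfsup : ∀ u ∈ (LinearMap.ker (B : U →ₗ[ℝ] W →L[ℝ] ℝ))ᗮ, β * ‖u‖ ≤ ‖B u‖)
    (d₀ : U →L[ℝ] ℝ) (hd₀ : ∀ v ∈ (LinearMap.ker (B : U →ₗ[ℝ] W →L[ℝ] ℝ))ᗮ, d₀ v = 0)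
    (w : W) (u : U)
    (h1 : ∀ wt : W, A w wt + B u wt = 0)
    (h2 : ∀ ut : U, B ut w - κ * D u ut = -(κ * d₀ ut)) :
    ‖w‖ ≤ (κ / α * ((d / δ) * (a / β) +
        Real.sqrt (4 * α / (κ * δ) + (d / δ) ^ 2 * (a / β) ^ 2)) / 2) * ‖d₀‖ ∧
    ‖w‖ ^ 2 - κ / α * (d / δ) * (a / β) * ‖d₀‖ * ‖w‖ - κ / (α * δ) * ‖d₀‖ ^ 2 ≤ 0 :=
  stmt6_general A B D α β δ a d κ hα hβ hδ hκ hAcont hDcont hAcoer hDpos hDcoer hinfsup d₀ hd₀ w u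
    h1 h2
end

section
/- Hessian sign-decomposition: with Z := A + κ⁻¹B₀D⁻¹B₀ᵗ symmetric coercive and solutions (w', u₀', u₁') of the derivative system related by F = Zw' + B₁u₁', the quantity A(w',w') + 2B(u',w') − κD(u',u') equals ⟨Zw' + B₁u₁', w' + Z⁻¹B₁u₁'⟩ − ⟨B₁u₁', Z⁻¹B₁u₁'⟩ − κ⁻¹⟨B₀'D⁻¹B₀'ᵗ w, w⟩, where u' = u₀' + u₁', B u' = B₀u₀' + B₁u₁', and κDu₀' = B₀'ᵗ w + B₀ᵗ w'. -/
/-!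
Write `a := B₀'ᵗ w` and `b := B₀ᵗ w'`, so that `κ D u₀' = a + b`. Symmetry of `D` turns every
pairing `φ u₀'` into `κ⁻¹ (a + b)(D⁻¹ φ)`, and the left-hand side collapses to
`A(w', w') + 2 ⟨B₁u₁', w'⟩ + κ⁻¹ (⟨b, D⁻¹b⟩ − ⟨a, D⁻¹a⟩)`, the mixed terms `⟨a, D⁻¹b⟩ = ⟨b, D⁻¹a⟩`
cancelling. On the right, `Z(w', w') = A(w', w') + κ⁻¹ ⟨b, D⁻¹b⟩`, and symmetry of `Z` gives
`Z(w', Z⁻¹B₁u₁') = ⟨B₁u₁', w'⟩`.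
-/

section SymmetricPairing

variable {𝕜 E : Type*} [NontriviallyNormedField 𝕜] [NormedAddCommGroup E] [NormedSpace 𝕜 E]

theorem apply_eq_apply_of_rightInverse (D : E →L[𝕜] StrongDual 𝕜 E)
    (hD : ∀ u v, D u v = D v u) (Dinv : StrongDual 𝕜 E → E) (hDinv : ∀ φ, D (Dinv φ) = φ)
    (φ : StrongDual 𝕜 E) (u : E) : φ u = D u (Dinv φ) := by
  conv_lhs => rw [← hDinv φ]
  exact hD _ _

theorem apply_rightInverse_comm (D : E →L[𝕜] StrongDual 𝕜 E)
    (hD : ∀ u v, D u v = D v u) (Dinv : StrongDual 𝕜 E → E) (hDinv : ∀ φ, D (Dinv φ) = φ)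
    (φ ψ : StrongDual 𝕜 E) : ψ (Dinv φ) = φ (Dinv ψ) := by
  rw [apply_eq_apply_of_rightInverse D hD Dinv hDinv ψ, hDinv]

end SymmetricPairing

theorem symm_add_smul_comp_comp {𝕜 W U : Type*} [NontriviallyNormedField 𝕜]
    [NormedAddCommGroup W] [NormedSpace 𝕜 W] [NormedAddCommGroup U] [NormedSpace 𝕜 U]
    (A : W →L[𝕜] StrongDual 𝕜 W) (hA : ∀ u v, A u v = A v u)
    (B : U →L[𝕜] StrongDual 𝕜 W) (Bt : W →L[𝕜] StrongDual 𝕜 U)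
    (hB : ∀ u v, B u v = Bt v u) (S : StrongDual 𝕜 U →L[𝕜] U)
    (hS : ∀ φ ψ : StrongDual 𝕜 U, ψ (S φ) = φ (S ψ)) (c : 𝕜) (u v : W) :
    (A + c • B.comp (S.comp Bt)) u v = (A + c • B.comp (S.comp Bt)) v u := by
  simp only [add_apply, smul_apply, ContinuousLinearMap.comp_apply, smul_eq_mul, hA u v, hB,
    hS (Bt u)]

theorem stmt16_general {W U₀ U₁ : Type*}
    [NormedAddCommGroup W] [InnerProductSpace ℝ W]
    [NormedAddCommGroup U₀] [InnerProductSpace ℝ U₀]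
    [NormedAddCommGroup U₁] [InnerProductSpace ℝ U₁]
    (A : W →L[ℝ] StrongDual ℝ W)
    (hAsym : ∀ w v : W, A w v = A v w)
    (B₀ B₀' : U₀ →L[ℝ] StrongDual ℝ W)
    (B₁ : U₁ →L[ℝ] StrongDual ℝ W)
    (B₀t B₀'t : W →L[ℝ] StrongDual ℝ U₀)
    (htrans₀ : ∀ (u : U₀) (v : W), B₀ u v = B₀t v u)
    (htrans₀' : ∀ (u : U₀) (v : W), B₀' u v = B₀'t v u)
    (D : U₀ →L[ℝ] StrongDual ℝ U₀)
    (hDsym : ∀ u v : U₀, D u v = D v u)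
    (Dinv : StrongDual ℝ U₀ →L[ℝ] U₀)
    (hDinv2 : ∀ φ, D (Dinv φ) = φ)
    (κ : ℝ) (hκ : 0 < κ)
    (Zinv : StrongDual ℝ W →L[ℝ] W)
    (hZinv2 : ∀ φ, (A + κ⁻¹ • (B₀.comp (Dinv.comp B₀t))) (Zinv φ) = φ)
    (w w' : W) (u₀' : U₀) (u₁' : U₁)
    (hrel : κ • D u₀' = B₀'t w + B₀t w') :
    A w' w' + 2 * (B₀ u₀' w' + B₁ u₁' w') - κ * D u₀' u₀'
      = ((A + κ⁻¹ • (B₀.comp (Dinv.comp B₀t))) w' + B₁ u₁')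
          (w' + Zinv (B₁ u₁'))
        - (B₁ u₁') (Zinv (B₁ u₁'))
        - κ⁻¹ * (B₀' (Dinv (B₀'t w))) w := by
  set Z := A + κ⁻¹ • (B₀.comp (Dinv.comp B₀t))
  set a := B₀'t w
  set b := B₀t w'
  have hDinv_comm := apply_rightInverse_comm D hDsym Dinv hDinv2
  have hZsym : ∀ u v, Z u v = Z v u :=
    symm_add_smul_comp_comp A hAsym B₀ B₀t htrans₀ Dinv hDinv_comm κ⁻¹
  have hZ_Zinv : Z w' (Zinv (B₁ u₁')) = B₁ u₁' w' :=
    (apply_eq_apply_of_rightInverse Z hZsym Zinv hZinv2 _ _).symm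
  have hZ_w' : Z w' w' = A w' w' + κ⁻¹ * b (Dinv b) := by
    simp [Z, b, htrans₀]
  have hpair_u₀' : ∀ φ, φ u₀' = κ⁻¹ * (a (Dinv φ) + b (Dinv φ)) := fun φ => by
    rw [apply_eq_apply_of_rightInverse D hDsym Dinv hDinv2 φ, ← add_apply,
      ← hrel, smul_apply, smul_eq_mul, inv_mul_cancel_left₀ hκ.ne']
  have hD_u₀' : κ * D u₀' u₀' = a u₀' + b u₀' := by
    rw [← smul_eq_mul, ← smul_apply, hrel, add_apply]
  have hB₀_u₀' : B₀ u₀' w' = b u₀' := htrans₀ u₀' w'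
  have hB₀'_a : B₀' (Dinv a) w = a (Dinv a) := htrans₀' _ w
  simp only [add_apply, map_add, hZ_Zinv, hZ_w', hB₀'_a, hD_u₀', hB₀_u₀',
    hpair_u₀' a, hpair_u₀' b, hDinv_comm b a]
  ring

theorem stmt16 {W U₀ U₁ : Type*}
    [NormedAddCommGroup W] [InnerProductSpace ℝ W] [CompleteSpace W]
    [NormedAddCommGroup U₀] [InnerProductSpace ℝ U₀] [CompleteSpace U₀]
    [NormedAddCommGroup U₁] [InnerProductSpace ℝ U₁] [CompleteSpace U₁]
    (A : W →L[ℝ] StrongDual ℝ W)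
    (hAsym : ∀ w v : W, A w v = A v w)
    (α : ℝ) (hα : 0 < α) (hAcoer : ∀ w : W, α * ‖w‖ ^ 2 ≤ A w w)
    (B₀ B₀' : U₀ →L[ℝ] StrongDual ℝ W)
    (B₁ : U₁ →L[ℝ] StrongDual ℝ W)
    (B₀t B₀'t : W →L[ℝ] StrongDual ℝ U₀)
    (B₁t : W →L[ℝ] StrongDual ℝ U₁)
    (htrans₀ : ∀ (u : U₀) (v : W), B₀ u v = B₀t v u)
    (htrans₀' : ∀ (u : U₀) (v : W), B₀' u v = B₀'t v u)
    (htrans₁ : ∀ (u : U₁) (v : W), B₁ u v = B₁t v u)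
    (D : U₀ →L[ℝ] StrongDual ℝ U₀)
    (hDsym : ∀ u v : U₀, D u v = D v u)
    (δ : ℝ) (hδ : 0 < δ) (hDcoer : ∀ u : U₀, δ * ‖u‖ ^ 2 ≤ D u u)
    (Dinv : StrongDual ℝ U₀ →L[ℝ] U₀)
    (hDinv1 : ∀ u : U₀, Dinv (D u) = u) (hDinv2 : ∀ φ, D (Dinv φ) = φ)
    (κ : ℝ) (hκ : 0 < κ)
    (Zinv : StrongDual ℝ W →L[ℝ] W)
    (hZinv1 : ∀ v : W, Zinv ((A + κ⁻¹ • (B₀.comp (Dinv.comp B₀t))) v) = v)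
    (hZinv2 : ∀ φ, (A + κ⁻¹ • (B₀.comp (Dinv.comp B₀t))) (Zinv φ) = φ)
    (w w' : W) (u₀' : U₀) (u₁' : U₁)
    (hrel : κ • D u₀' = B₀'t w + B₀t w') :
    A w' w' + 2 * (B₀ u₀' w' + B₁ u₁' w') - κ * D u₀' u₀'
      = ((A + κ⁻¹ • (B₀.comp (Dinv.comp B₀t))) w' + B₁ u₁')
          (w' + Zinv (B₁ u₁'))
        - (B₁ u₁') (Zinv (B₁ u₁'))
        - κ⁻¹ * (B₀' (Dinv (B₀'t w))) w :=
  stmt16_general A hAsym B₀ B₀' B₁ B₀t B₀'t htrans₀ htrans₀' D hDsym Dinv hDinv2 κ hκ Zinv hZinv2 w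
    w' u₀' u₁' hrel
end

section
/- Perturbation estimate for the large-κ limit: if for all κ ≥ κ₀ > 0 the solution operator of the coupled system satisfies the κ-uniform bounds of the large-κ estimates, and the truncation error Δ𝖴 = 𝖴 − 𝖴⁽⁰⁾ solves the same system with data f = 0 and d₀ = κ⁻¹B₀ᵗw⁽⁰⁾, then there is a constant C(κ₀) independent of κ such that ‖Δ𝖴‖ ≤ κ⁻¹C(κ₀) for all κ ≥ κ₀; i.e., 𝖴 = 𝖴⁽⁰⁾ + O(κ⁻¹). -/
/-!
Each of the three component bounds has the form `κ⁻¹ * g(κ)` with `g` antitone in `κ` (its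
dependence on `κ` is through `c / κ` with `c ≥ 0`), so on `κ ≥ κ₀` it is dominated by
`κ⁻¹ * g(κ₀)`; the product norm is the maximum of the component norms.
-/

lemma exists_pos_forall_norm_le_inv_mul {E : Type*} [NormedAddCommGroup E] {κ₀ C₀ : ℝ}
    (hκ₀ : 0 < κ₀) {x : ℝ → E} (h : ∀ κ ≥ κ₀, ‖x κ‖ ≤ κ⁻¹ * C₀) :
    ∃ C > 0, ∀ κ ≥ κ₀, ‖x κ‖ ≤ κ⁻¹ * C :=
  ⟨max C₀ 1, by positivity, fun κ hκ => (h κ hκ).trans <|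
    mul_le_mul_of_nonneg_left (le_max_left _ _) (inv_nonneg.2 (hκ₀.le.trans hκ))⟩

lemma Prod.norm_le_of_le₃ {E F G : Type*} [NormedAddCommGroup E] [NormedAddCommGroup F]
    [NormedAddCommGroup G] {x : E × F × G} {c : ℝ} (h₁ : ‖x.1‖ ≤ c) (h₂ : ‖x.2.1‖ ≤ c)
    (h₃ : ‖x.2.2‖ ≤ c) : ‖x‖ ≤ c := by
  simpa only [Prod.norm_def, max_le_iff] using ⟨h₁, h₂, h₃⟩

theorem stmt18_general {W U₀ U₁ : Type*}
    [NormedAddCommGroup W] [NormedAddCommGroup U₀] [NormedAddCommGroup U₁]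
    (κ₀ : ℝ) (hκ₀ : 0 < κ₀)
    (a α b β δ : ℝ) (hα : 0 < α) (hβ : 0 < β) (hδ : 0 < δ)
    (hb : 0 ≤ b)
    (w0 : W)
    (ΔU : ℝ → W × U₀ × U₁)
    (h1 : ∀ κ ≥ κ₀, ‖(ΔU κ).1‖ ≤ ((b / α) * (b / δ) / κ) * ‖w0‖)
    (h2 : ∀ κ ≥ κ₀, ‖(ΔU κ).2.1‖ ≤ ((b / δ) / κ) * (1 + (b / α) * (b / δ) / κ) * ‖w0‖)
    (h3 : ∀ κ ≥ κ₀, ‖(ΔU κ).2.2‖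
        ≤ κ⁻¹ * (1 + a / α + (b / α) * (b / δ) / κ) * ((b / δ) / β) * ‖w0‖) :
    ∃ C > 0, ∀ κ ≥ κ₀, ‖ΔU κ‖ ≤ κ⁻¹ * C := by
  set s := b / δ
  set t := b / α
  have hs : 0 ≤ s := by positivity
  have ht : 0 ≤ t := by positivity
  set C₁ := t * s * ‖w0‖
  set C₂ := s * (1 + t * s / κ₀) * ‖w0‖
  set C₃ := (1 + a / α + t * s / κ₀) * (s / β) * ‖w0‖
  refine exists_pos_forall_norm_le_inv_mul hκ₀ (C₀ := max C₁ (max C₂ C₃)) fun κ hκ => ?_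
  have hκ_pos : 0 < κ := hκ₀.trans_le hκ
  have hts : t * s / κ ≤ t * s / κ₀ := by gcongr
  have b₁ : ‖(ΔU κ).1‖ ≤ κ⁻¹ * C₁ := (h1 κ hκ).trans_eq (by ring)
  have b₂ : ‖(ΔU κ).2.1‖ ≤ κ⁻¹ * C₂ := calc
    _ ≤ s / κ * (1 + t * s / κ₀) * ‖w0‖ := (h2 κ hκ).trans (by gcongr)
    _ = κ⁻¹ * C₂ := by ring
  have b₃ : ‖(ΔU κ).2.2‖ ≤ κ⁻¹ * C₃ := calc
    _ ≤ κ⁻¹ * (1 + a / α + t * s / κ₀) * (s / β) * ‖w0‖ := (h3 κ hκ).trans (by gcongr)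
    _ = κ⁻¹ * C₃ := by ring
  have hκ_inv : 0 ≤ κ⁻¹ := by positivity
  exact Prod.norm_le_of_le₃ (b₁.trans (by gcongr; exact le_max_left _ _))
    (b₂.trans (by gcongr; exact (le_max_left _ _).trans (le_max_right _ _)))
    (b₃.trans (by gcongr; exact (le_max_right _ _).trans (le_max_right _ _)))

theorem stmt18 {W U₀ U₁ : Type*}
    [NormedAddCommGroup W] [NormedAddCommGroup U₀] [NormedAddCommGroup U₁]
    (κ₀ : ℝ) (hκ₀ : 0 < κ₀)
    (a α b β δ : ℝ) (hα : 0 < α) (hβ : 0 < β) (hδ : 0 < δ)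
    (ha : 0 ≤ a) (hb : 0 ≤ b)
    (w0 : W)
    (ΔU : ℝ → W × U₀ × U₁)
    (h1 : ∀ κ ≥ κ₀, ‖(ΔU κ).1‖ ≤ ((b / α) * (b / δ) / κ) * ‖w0‖)
    (h2 : ∀ κ ≥ κ₀, ‖(ΔU κ).2.1‖ ≤ ((b / δ) / κ) * (1 + (b / α) * (b / δ) / κ) * ‖w0‖)
    (h3 : ∀ κ ≥ κ₀, ‖(ΔU κ).2.2‖
        ≤ κ⁻¹ * (1 + a / α + (b / α) * (b / δ) / κ) * ((b / δ) / β) * ‖w0‖) :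
    ∃ C > 0, ∀ κ ≥ κ₀, ‖ΔU κ‖ ≤ κ⁻¹ * C :=
  stmt18_general κ₀ hκ₀ a α b β δ hα hβ hδ hb w0 ΔU h1 h2 h3
end
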